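/- arXiv:1810.00409 — 4 statements merged into one kernel-verified Lean document; each statement's English description precedes it below -/
import Mathlib

section
/- Let n ≥ 7 be an integer and x = 2πj/n with n not dividing j. Then |2 + cos(x)| ≤ 3 - π²/n² and |1 + 2cos(x)| ≤ 3 - 2π²/n². -/
set_option maxHeartbeats 1000000

theorem cos_abs_bounds_of_not_dvd (n : ℕ) (hn : 7 ≤ n) (j : ℤ) (hj : ¬ (n : ℤ) ∣ j)
    (x : ℝ) (hx : x = 2 * Real.pi * j / n) :
    |2 + Real.cos x| ≤ 3 - Real.pi ^ 2 / n ^ 2 ∧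
      |1 + 2 * Real.cos x| ≤ 3 - 2 * Real.pi ^ 2 / n ^ 2 := by
  have hn7 : (7:ℝ) ≤ n := by exact_mod_cast hn
  have hnpos : (0:ℝ) < n := by linarith
  have pi_pos := Real.pi_pos
  have pi_lt : Real.pi < 3.15 := Real.pi_lt_d2
  have hnz : (n:ℤ) ≠ 0 := by positivity
  set q := j / (n:ℤ) with hq
  set r := j % (n:ℤ) with hrdef
  have hj' : j = n * q + r := by rw [hq, hrdef]; exact (Int.mul_ediv_add_emod j n).symm
  have hr0 : 0 < r := by
    rcases lt_or_eq_of_le (Int.emod_nonneg j hnz) with h | h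
    · exact h
    · exact absurd (Int.dvd_of_emod_eq_zero h.symm) hj
  have hrlt : r < n := Int.emod_lt_of_pos j (by positivity)
  have hr1 : (1:ℝ) ≤ (r:ℝ) := by exact_mod_cast hr0
  have hrn : (r:ℝ) ≤ (n:ℝ) - 1 := by
    have : r ≤ (n:ℤ) - 1 := by omega
    exact_mod_cast this
  have hxeq : x = q * (2 * Real.pi) + 2 * Real.pi * r / n := by
    rw [hx, hj']; push_cast; field_simp
  have hcx : Real.cos x = Real.cos (2 * Real.pi * r / n) := by
    rw [hxeq, add_comm, Real.cos_add_int_mul_two_pi]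
  -- monotone step: cos (2πr/n) ≤ cos (2π/n)
  set s := 2 * Real.pi / n with hs
  have hs0 : 0 < s := by positivity
  have hmono : Real.cos (2 * Real.pi * r / n) ≤ Real.cos s := by
    rcases le_or_gt (2 * Real.pi * r / n) Real.pi with h | h
    · apply Real.cos_le_cos_of_nonneg_of_le_pi hs0.le h
      rw [hs, div_le_div_iff₀ hnpos hnpos]
      nlinarith [mul_nonneg (mul_nonneg (by linarith : (0:ℝ) ≤ 2 * Real.pi)
        (by linarith : (0:ℝ) ≤ (r:ℝ) - 1)) hnpos.le]
    · have h2 : Real.cos (2 * Real.pi * r / n) =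
          Real.cos (2 * Real.pi - 2 * Real.pi * r / n) := by
        rw [show 2 * Real.pi - 2 * Real.pi * r / n
            = -(2 * Real.pi * r / n - 2 * Real.pi) by ring,
          Real.cos_neg, Real.cos_sub_two_pi]
      rw [h2]
      apply Real.cos_le_cos_of_nonneg_of_le_pi hs0.le (by linarith)
      have h3 : 2 * Real.pi * r / n ≤ 2 * Real.pi * ((n:ℝ) - 1) / n := by
        gcongr <;> linarith
      have h4 : 2 * Real.pi * ((n:ℝ) - 1) / n = 2 * Real.pi - s := by
        rw [hs]; field_simp
      linarith
  -- quantitative step: cos s ≤ 1 - π²/n²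
  have hs1 : |s| ≤ 1 := by
    rw [abs_of_pos hs0, hs, div_le_one hnpos]; nlinarith
  have hb := Real.cos_bound hs1
  rw [abs_of_pos hs0, abs_le] at hb
  have hkey : Real.cos s ≤ 1 - Real.pi ^ 2 / n ^ 2 := by
    have h1 : Real.cos s ≤ 1 - s ^ 2 / 2 + s ^ 4 * (5 / 96) := by linarith [hb.2]
    have hs2 : s ^ 2 = 4 * Real.pi ^ 2 / n ^ 2 := by rw [hs]; ring
    have hs4 : s ^ 4 = 16 * Real.pi ^ 4 / n ^ 4 := by rw [hs]; ring
    rw [hs2, hs4] at h1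
    have hq : 16 * Real.pi ^ 4 / n ^ 4 * (5 / 96) ≤ Real.pi ^ 2 / n ^ 2 := by
      rw [div_mul_eq_mul_div, div_le_div_iff₀ (by positivity) (by positivity)]
      have hpi2 : Real.pi ^ 2 ≤ 10 := by nlinarith
      have hpi4 : Real.pi ^ 4 ≤ 10 * Real.pi ^ 2 := by nlinarith [sq_nonneg Real.pi]
      have hn2 : (49:ℝ) ≤ (n:ℝ) ^ 2 := by nlinarith
      have h1 : Real.pi ^ 4 * (n:ℝ) ^ 2 ≤ 10 * (Real.pi ^ 2 * (n:ℝ) ^ 2) := by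
        nlinarith [sq_nonneg (n:ℝ)]
      have h2 : Real.pi ^ 2 * (n:ℝ) ^ 2 * 49 ≤ Real.pi ^ 2 * (n:ℝ) ^ 4 := by
        nlinarith [mul_pos (pow_pos pi_pos 2) (pow_pos hnpos 2)]
      nlinarith
    have : 4 * Real.pi ^ 2 / n ^ 2 = 4 * (Real.pi ^ 2 / n ^ 2) := by ring
    rw [this] at h1
    linarith
  have hc : Real.cos x ≤ 1 - Real.pi ^ 2 / n ^ 2 := by
    rw [hcx]; exact hmono.trans hkey
  have hc1 : -1 ≤ Real.cos x := Real.neg_one_le_cos x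
  have hpn : Real.pi ^ 2 / n ^ 2 ≤ 1 := by
    rw [div_le_one (by positivity)]; nlinarith
  constructor
  · rw [abs_of_nonneg (by linarith)]; linarith
  · have e2 : 2 * Real.pi ^ 2 / (n:ℝ) ^ 2 = 2 * (Real.pi ^ 2 / (n:ℝ) ^ 2) := by ring
    rw [abs_le, e2]; constructor <;> linarith
end

section
/- Let n ≥ 7 be an integer and let x, y, z be real numbers of the form 2πk/n for integers k, such that x + y + z is an integer multiple of 2π but at least one of x, y, z is not an integer multiple of 2π. Then |cos(x) + cos(y) + cos(z)| ≤ 3 - 2π²/n². -/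
/-!
Since `x + y + z ∈ 2πℤ` we have `cos z = cos (x + y)`, hence
`0 ≤ |1 + e^{ix} + e^{i(x+y)}|² = 3 + 2(cos x + cos y + cos z)`: the sum is at least `-3/2`,
which is far above `-(3 - 2π²/n²)`. For the upper bound, the divisibility of `kx + ky + kz`
by `n` forces at least two of the `k`'s to be nonzero modulo `n`; each such angle lies at distance
at least `θ = 2π/n` from `2πℤ`, so its cosine is at most `cos θ ≤ 1 - θ²/4 = 1 - π²/n²`.
-/

open Real

lemma two_not_dvd_of_dvd_add_add {α : Type*} [Ring α] {n a b c : α}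
    (hsum : n ∣ a + b + c) (hnot : ¬ (n ∣ a ∧ n ∣ b ∧ n ∣ c)) :
    (¬ n ∣ a ∧ ¬ n ∣ b) ∨ (¬ n ∣ a ∧ ¬ n ∣ c) ∨ (¬ n ∣ b ∧ ¬ n ∣ c) := by
  have hc : n ∣ a → n ∣ b → n ∣ c := fun ha hb => (dvd_add_right (dvd_add ha hb)).1 hsum
  have hb : n ∣ a → n ∣ c → n ∣ b := fun ha hc =>
    (dvd_add_right (dvd_add ha hc)).1 (by rwa [add_right_comm] at hsum)
  have ha : n ∣ b → n ∣ c → n ∣ a := fun hb hc =>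
    (dvd_add_left (dvd_add hb hc)).1 (by rwa [add_assoc] at hsum)
  tauto

namespace Real

lemma neg_three_halves_le_cos_add_cos_add_cos {x y z : ℝ} {m : ℤ}
    (h : x + y + z = m * (2 * π)) :
    -(3 / 2) ≤ cos x + cos y + cos z := by
  have hz : cos z = cos (x + y) := by
    rw [show z = -(x + y) + m * (2 * π) by linarith, cos_add_int_mul_two_pi, cos_neg]
  have hy : cos y = cos (x + y) * cos x + sin (x + y) * sin x := by
    rw [← cos_sub, add_sub_cancel_left]
  nlinarith [sq_nonneg (1 + cos x + cos (x + y)), sq_nonneg (sin x + sin (x + y)),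
    sin_sq_add_cos_sq x, sin_sq_add_cos_sq (x + y)]

lemma cos_le_one_sub_sq_div_four {t : ℝ} (ht : |t| ≤ 1) : cos t ≤ 1 - t ^ 2 / 4 := by
  have h := (abs_le.1 (cos_bound ht)).2
  have ht2 : t ^ 2 ≤ 1 := by rw [← sq_abs]; exact pow_le_one₀ (abs_nonneg t) ht
  have h4 : |t| ^ 4 = (t ^ 2) ^ 2 := by rw [← sq_abs t]; ring
  rw [h4] at h
  nlinarith [sq_nonneg t]

lemma cos_le_cos_of_mem_Icc {δ θ : ℝ} (hδ : 0 ≤ δ) (hθ : θ ∈ Set.Icc δ (2 * π - δ)) :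
    cos θ ≤ cos δ := by
  rcases le_total θ π with h | h
  · exact cos_le_cos_of_nonneg_of_le_pi hδ h hθ.1
  · rw [← cos_two_pi_sub θ]
    exact cos_le_cos_of_nonneg_of_le_pi hδ (by linarith) (by linarith [hθ.2])

lemma cos_two_pi_mul_div_eq_emod {n : ℕ} (hn : n ≠ 0) (k : ℤ) :
    cos (2 * π * k / n) = cos (2 * π * (k % n : ℤ) / n) := by
  have hk : (k : ℝ) = (k % n : ℤ) + n * (k / n : ℤ) := by
    exact_mod_cast (Int.emod_add_mul_ediv k n).symm
  rw [hk, ← cos_add_int_mul_two_pi (2 * π * (k % n : ℤ) / n) (k / n)]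
  congr 1
  field_simp

lemma cos_two_pi_mul_div_le_cos_two_pi_div {n : ℕ} {k : ℤ} (hk : ¬ (n : ℤ) ∣ k) :
    cos (2 * π * k / n) ≤ cos (2 * π / n) := by
  rcases Nat.eq_zero_or_pos n with rfl | hn
  · simp
  have hnR : (0 : ℝ) < n := Nat.cast_pos.2 hn
  have hr0 : 1 ≤ k % n := by
    have := Int.emod_nonneg k (Int.natCast_ne_zero.2 hn.ne')
    have := mt Int.dvd_of_emod_eq_zero hk
    omega
  have hr1 : k % n + 1 ≤ n := Int.emod_lt_of_pos k (by exact_mod_cast hn)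
  have hr0R : (1 : ℝ) ≤ (k % n : ℤ) := by exact_mod_cast hr0
  have hr1R : ((k % n : ℤ) : ℝ) + 1 ≤ n := by exact_mod_cast hr1
  rw [cos_two_pi_mul_div_eq_emod hn.ne']
  refine cos_le_cos_of_mem_Icc (by positivity) ⟨?_, ?_⟩
  · rw [div_le_div_iff_of_pos_right hnR]
    exact le_mul_of_one_le_right (by positivity) hr0R
  · rw [div_le_iff₀ hnR, sub_mul, div_mul_cancel₀ _ hnR.ne']
    nlinarith [pi_pos]

lemma cos_two_pi_mul_div_le_one_sub {n : ℕ} (hn : 7 ≤ n) {k : ℤ} (hk : ¬ (n : ℤ) ∣ k) :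
    cos (2 * π * k / n) ≤ 1 - π ^ 2 / n ^ 2 := by
  have hnR : (7 : ℝ) ≤ n := by exact_mod_cast hn
  have hθ : |2 * π / n| ≤ 1 := by
    rw [abs_of_nonneg (by positivity), div_le_one (by linarith)]
    linarith [pi_lt_d2]
  calc cos (2 * π * k / n) ≤ cos (2 * π / n) := cos_two_pi_mul_div_le_cos_two_pi_div hk
    _ ≤ 1 - (2 * π / n) ^ 2 / 4 := cos_le_one_sub_sq_div_four hθ
    _ = 1 - π ^ 2 / n ^ 2 := by ring

end Real

theorem cos_sum_bound (n : ℕ) (hn : 7 ≤ n) (kx ky kz : ℤ) (x y z : ℝ)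
    (hx : x = 2 * Real.pi * kx / n) (hy : y = 2 * Real.pi * ky / n)
    (hz : z = 2 * Real.pi * kz / n)
    (hsum : (n : ℤ) ∣ (kx + ky + kz))
    (hnot : ¬ ((n : ℤ) ∣ kx ∧ (n : ℤ) ∣ ky ∧ (n : ℤ) ∣ kz)) :
    |Real.cos x + Real.cos y + Real.cos z| ≤ 3 - 2 * Real.pi ^ 2 / n ^ 2 := by
  have hnR : (7 : ℝ) ≤ n := by exact_mod_cast hn
  have hπn : 2 * π ^ 2 / n ^ 2 ≤ 3 / 2 := by
    rw [div_le_iff₀ (by positivity)]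
    nlinarith [pi_lt_d2, pi_pos]
  have hpair := two_not_dvd_of_dvd_add_add hsum hnot
  obtain ⟨m, hm⟩ := hsum
  have hxyz : x + y + z = m * (2 * π) := by
    have hmR : (kx : ℝ) + ky + kz = n * m := by exact_mod_cast hm
    rw [hx, hy, hz, ← add_div, ← add_div, div_eq_iff (by positivity)]
    linear_combination 2 * π * hmR
  subst hx hy hz
  rw [abs_le]
  refine ⟨by linarith [neg_three_halves_le_cos_add_cos_add_cos hxyz], ?_⟩
  rw [show 2 * π ^ 2 / (n : ℝ) ^ 2 = 2 * (π ^ 2 / n ^ 2) by ring]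
  rcases hpair with ⟨ha, hb⟩ | ⟨ha, hb⟩ | ⟨ha, hb⟩ <;>
    linarith [cos_two_pi_mul_div_le_one_sub hn ha, cos_two_pi_mul_div_le_one_sub hn hb,
      cos_le_one (2 * π * kx / n), cos_le_one (2 * π * ky / n), cos_le_one (2 * π * kz / n)]
end

section
/- Let n ≥ 3 be odd and let M be the n×n matrix with M(a,a+1) = M(a+1,a) = 1 for 0 ≤ a ≤ n-2, M(n-1,0) = 2, M(n-1,n-2) = 2 (overriding the previous value in that position), and all other entries 0 (rows and columns indexed 0,…,n-1). Then the characteristic polynomial of M equals that of the circulant matrix with first row (0,1,0,…,0,1); in particular the eigenvalues of M are 2cos(2πj/n) for 0 ≤ j ≤ n-1. -/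
open scoped BigOperators

/-- The McKay matrix of tensoring with the 2-dimensional module for `u_ξ(sl₂)`:
ones on the sub- and super-diagonal, except the last row has 2's in columns `0` and `n-2`. -/
def McKayM (n : ℕ) : Matrix (Fin n) (Fin n) ℂ := fun a b =>
  if (a : ℕ) = n - 1 then (if (b : ℕ) = 0 ∨ (b : ℕ) = n - 2 then 2 else 0)
  else if (b : ℕ) = (a : ℕ) + 1 ∨ (a : ℕ) = (b : ℕ) + 1 then 1 else 0

/-- The circulant matrix with first row `(0,1,0,…,0,1)`. -/
def CircM (n : ℕ) : Matrix (Fin n) (Fin n) ℂ := fun a b =>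
  if ((a : ℕ) + 1) % n = (b : ℕ) ∨ ((b : ℕ) + 1) % n = (a : ℕ) then 1 else 0

/-!
If `A *ᵥ v = Pi.single k c`, multiplying by the adjugate gives `det A * v j = c * adjugate A j k`.
Write `Sⱼ` for the Chebyshev polynomials with `S₀ = 1`, `S₁ = X`, `Sⱼ₊₁ = X Sⱼ - Sⱼ₋₁`, and
`Cₙ = X Sₙ₋₁ - 2 Sₙ₋₂` (so `Cₙ(2 cos θ) = 2 cos nθ`). Every row of `X - M` except the last is a
row of the path, so the vector `(S₀, …, Sₙ₋₁)` is mapped to `(Cₙ - 2) eₙ₋₁`; as `S₀ = 1` and both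
`det (X - M)` and `Cₙ - 2` are monic of degree `n`, the cofactor is `1` and `charpoly M = Cₙ - 2`.
For the cycle the vector `Sⱼ + Sₙ₋₂₋ⱼ` is mapped to `(Cₙ - 2) eₙ₋₁`, and its last entry `Sₙ₋₁`
equals the cofactor at `(n-1, n-1)`: that minor is the path on `n - 1` vertices, whose
characteristic polynomial is `Sₙ₋₁` by the first argument. Hence `charpoly C = Cₙ - 2` as well,
and `Cₙ(2 cos (2πj/n)) - 2 = 2 cos 2πj - 2 = 0`.
-/

open Polynomial Matrix SimpleGraph

namespace Matrix

variable {ι R : Type*} [Fintype ι] [DecidableEq ι] [CommRing R]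

theorem det_mul_eq_mul_adjugate_of_mulVec_eq_single {A : Matrix ι ι R} {v : ι → R} {k : ι}
    {c : R} (h : A *ᵥ v = Pi.single k c) (j : ι) : A.det * v j = c * A.adjugate j k := by
  have := congrFun (congrArg (A.adjugate *ᵥ ·) h) j
  simpa [mulVec_mulVec, adjugate_mul, mulVec_single, smul_mulVec, mul_comm] using this

theorem charpoly_eq_of_charmatrix_mulVec_eq_single [Nontrivial R] {B : Matrix ι ι R}
    {v : ι → R[X]} {j k : ι} {p : R[X]} (hv : v j = 1) (hp : p.IsMonicOfDegree (Fintype.card ι))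
    (h : B.charmatrix *ᵥ v = Pi.single k p) : B.charpoly = p := by
  have hdet := det_mul_eq_mul_adjugate_of_mulVec_eq_single h j
  rw [hv, mul_one] at hdet
  have hmonic : B.charpoly.IsMonicOfDegree (Fintype.card ι) :=
    ⟨B.charpoly_natDegree_eq_dim, B.charpoly_monic⟩
  -- `charpoly = p * adjugate j k` with both sides monic of the same degree
  have hadj : B.charmatrix.adjugate j k = 1 :=
    isMonicOfDegree_zero_iff.1 (hp.of_mul_left (n := 0) (hdet ▸ hmonic))
  rw [charpoly, hdet, hadj, mul_one]

theorem charmatrix_mulVec (B : Matrix ι ι R) (v : ι → R[X]) :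
    B.charmatrix *ᵥ v = (X : R[X]) • v - B.map C *ᵥ v := by
  simp [charmatrix, sub_mulVec]

theorem charmatrix_add_mulVec (A D : Matrix ι ι R) (v : ι → R[X]) :
    (A + D).charmatrix *ᵥ v = A.charmatrix *ᵥ v - D.map C *ᵥ v := by
  rw [charmatrix_mulVec, charmatrix_mulVec, Matrix.map_add _ (map_add C), add_mulVec]
  abel

theorem single_mulVec_eq_single (i j : ι) (c : R) (v : ι → R) :
    single i j c *ᵥ v = Pi.single i (c * v j) := by
  rw [single_mulVec_eq, ← Pi.single_smul', smul_eq_mul, mul_one]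

theorem charmatrix_submatrix {κ : Type*} [Fintype κ] [DecidableEq κ] (B : Matrix ι ι R)
    {f : κ → ι} (hf : Function.Injective f) :
    B.charmatrix.submatrix f f = (B.submatrix f f).charmatrix := by
  ext i j
  simp [charmatrix_apply, diagonal_apply, hf.eq_iff]

end Matrix

namespace Polynomial.Chebyshev

variable (R : Type*) [CommRing R]

theorem X_mul_S (n : ℤ) : X * S R n = S R (n - 1) + S R (n + 1) := by
  rw [S_add_one]
  ring

theorem C_add_two_eq_X_mul_S_sub_two_mul_S (n : ℤ) :
    C R (n + 2) = X * S R (n + 1) - 2 * S R n := by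
  rw [C_eq_S_sub_X_mul_S, S_add_two]
  ring_nf

variable [Nontrivial R]

theorem isMonicOfDegree_S : ∀ n : ℕ, (S R n).IsMonicOfDegree n
  | 0 => by simp [isMonicOfDegree_zero_iff]
  | 1 => by simp [isMonicOfDegree_X]
  | n + 2 => by
    have h := (isMonicOfDegree_X R).mul (isMonicOfDegree_S (n + 1))
    rw [add_comm 1] at h
    push_cast
    rw [S_add_two]
    exact h.sub (by rw [(isMonicOfDegree_S n).natDegree_eq]; omega)

theorem isMonicOfDegree_C_sub_two {n : ℕ} (hn : 2 ≤ n) : (C R n - 2).IsMonicOfDegree n := by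
  obtain ⟨m, rfl⟩ := Nat.exists_eq_add_of_le' hn
  have h := (isMonicOfDegree_X R).mul (isMonicOfDegree_S R (m + 1))
  rw [add_comm 1] at h
  have : C R ((m + 2 : ℕ) : ℤ) - 2 = X * S R ((m + 1 : ℕ) : ℤ) - (2 * S R m + 2) := by
    push_cast; rw [C_add_two_eq_X_mul_S_sub_two_mul_S]; ring
  rw [this]
  refine h.sub <| (natDegree_add_le _ _).trans_lt <| max_lt ?_ (by simp)
  calc (2 * S R m).natDegree ≤ (2 : R[X]).natDegree + (S R m).natDegree := natDegree_mul_le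
    _ < m + 2 := by simp [(isMonicOfDegree_S R m).natDegree_eq]

theorem isRoot_C_sub_two_two_mul_cos {n : ℕ} (hn : n ≠ 0) (j : ℕ) :
    (C ℂ n - 2).IsRoot ((2 * Real.cos (2 * Real.pi * j / n) : ℝ) : ℂ) := by
  have hθ : ((n : ℤ) : ℂ) * ((2 * Real.pi * j / n : ℝ) : ℂ) = j * (2 * Real.pi) := by
    push_cast
    field_simp
  rw [IsRoot, eval_sub, Complex.ofReal_mul, Complex.ofReal_cos, Complex.ofReal_ofNat,
    C_two_mul_complex_cos, hθ, Complex.cos_nat_mul_two_pi]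
  simp

end Polynomial.Chebyshev

namespace SimpleGraph

instance pathGraph.decidableRelAdj (n : ℕ) : DecidableRel (pathGraph n).Adj :=
  fun _ _ => decidable_of_iff' _ pathGraph_adj

theorem sum_ite_pathGraph_adj {M : Type*} [AddCommMonoid M] {n : ℕ} (f : ℕ → M) (i : Fin n) :
    ∑ j, (if (pathGraph n).Adj i j then f j else 0) =
      (if (i : ℕ) + 1 < n then f (i + 1) else 0) + (if (i : ℕ) = 0 then 0 else f (i - 1)) := by
  simp only [pathGraph_adj]
  rw [Fin.sum_univ_eq_sum_range (fun j => if (i : ℕ) + 1 = j ∨ j + 1 = i then f j else 0)]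
  have hsplit : ∀ j : ℕ, (if (i : ℕ) + 1 = j ∨ j + 1 = i then f j else 0) =
      (if (i : ℕ) + 1 = j then f j else 0) + (if j + 1 = i then f j else 0) := by
    intro j; split_ifs <;> first | omega | simp
  simp only [hsplit, Finset.sum_add_distrib, Finset.sum_ite_eq, Finset.mem_range]
  congr 1
  obtain ⟨i, hi⟩ := i
  cases i with
  | zero => simp
  | succ i => simp [Finset.sum_ite_eq', Finset.mem_range]; omega

variable {R : Type*} [CommRing R]

theorem charmatrix_adjMatrix_pathGraph_mulVec (g : ℤ → R[X])
    (hg : ∀ k, X * g k = g (k - 1) + g (k + 1)) (m : ℕ) :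
    ((pathGraph (m + 1)).adjMatrix R).charmatrix *ᵥ (fun i => g i) =
      Pi.single 0 (g (-1)) + Pi.single (Fin.last m) (g (m + 1)) := by
  funext i
  have hrow : (((pathGraph (m + 1)).adjMatrix R).map C *ᵥ (fun i => g i)) i =
      (if (i : ℕ) + 1 < m + 1 then g ((i : ℕ) + 1 : ℕ) else 0) +
        (if (i : ℕ) = 0 then 0 else g ((i : ℕ) - 1 : ℕ)) := by
    simp only [mulVec, dotProduct, map_apply, adjMatrix_apply, apply_ite C, map_one, map_zero,
      ite_mul, one_mul, zero_mul]
    exact sum_ite_pathGraph_adj (fun j : ℕ => g j) i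
  rw [charmatrix_mulVec, Pi.sub_apply, Pi.smul_apply, smul_eq_mul, hrow, hg, Pi.add_apply,
    Pi.single_apply, Pi.single_apply]
  obtain ⟨k, hk⟩ := i
  simp only [Fin.ext_iff, Fin.val_zero, Fin.val_last]
  split_ifs <;> (try subst_vars) <;>
    first | omega | (push_cast [Nat.cast_sub (by omega : 1 ≤ k)]; ring) | (push_cast; ring)

theorem charpoly_adjMatrix_pathGraph [Nontrivial R] :
    ∀ m : ℕ, ((pathGraph m).adjMatrix R).charpoly = Chebyshev.S R m
  | 0 => by simp [charpoly_isEmpty]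
  | m + 1 => by
    refine charpoly_eq_of_charmatrix_mulVec_eq_single
      (v := fun i : Fin (m + 1) => Chebyshev.S R (i : ℕ)) (j := 0) (k := Fin.last m) (by simp)
      (by simpa using Chebyshev.isMonicOfDegree_S R (m + 1)) ?_
    rw [charmatrix_adjMatrix_pathGraph_mulVec _ (Chebyshev.X_mul_S R) m, Chebyshev.S_neg_one]
    simp

end SimpleGraph

theorem mcKayM_eq_adjMatrix_pathGraph_add (m : ℕ) :
    McKayM (m + 3) = (pathGraph (m + 3)).adjMatrix ℂ + single (Fin.last _) 0 2 +
      single (Fin.last _) (Fin.last (m + 1)).castSucc 1 := by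
  ext i j
  simp only [McKayM, Matrix.add_apply, adjMatrix_apply, pathGraph_adj, single_apply, Fin.ext_iff,
    Fin.val_last, Fin.val_castSucc, Fin.val_zero]
  split_ifs <;> first | omega | norm_num

theorem circM_eq_adjMatrix_pathGraph_add (m : ℕ) :
    CircM (m + 3) = (pathGraph (m + 3)).adjMatrix ℂ + single (Fin.last _) 0 1 +
      single 0 (Fin.last _) 1 := by
  ext i j
  have hmod : ∀ k : Fin (m + 3),
      ((k : ℕ) + 1) % (m + 3) = if (k : ℕ) = m + 2 then (0 : ℕ) else (k : ℕ) + 1 := by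
    intro k
    split_ifs with hk
    · rw [hk, Nat.mod_self]
    · exact Nat.mod_eq_of_lt (by omega)
  simp only [hmod, CircM, Matrix.add_apply, adjMatrix_apply, pathGraph_adj, single_apply,
    Fin.ext_iff, Fin.val_last, Fin.val_zero]
  split_ifs <;> first | omega | norm_num

theorem circM_submatrix_castSucc (m : ℕ) :
    (CircM (m + 1)).submatrix Fin.castSucc Fin.castSucc = (pathGraph m).adjMatrix ℂ := by
  ext i j
  simp only [CircM, submatrix_apply, adjMatrix_apply, pathGraph_adj, Fin.val_castSucc,
    Nat.mod_eq_of_lt (by omega : (i : ℕ) + 1 < m + 1),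
    Nat.mod_eq_of_lt (by omega : (j : ℕ) + 1 < m + 1)]

theorem charmatrix_mcKayM_mulVec (m : ℕ) :
    (McKayM (m + 3)).charmatrix *ᵥ (fun i => Chebyshev.S ℂ (i : ℕ)) =
      Pi.single (Fin.last _) (Chebyshev.C ℂ ((m + 3 : ℕ) : ℤ) - 2) := by
  rw [mcKayM_eq_adjMatrix_pathGraph_add, charmatrix_add_mulVec, charmatrix_add_mulVec,
    charmatrix_adjMatrix_pathGraph_mulVec _ (Chebyshev.X_mul_S ℂ), map_single, map_single,
    single_mulVec_eq_single, single_mulVec_eq_single]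
  simp only [Chebyshev.S_neg_one, Pi.single_zero, zero_add, ← Pi.single_sub]
  congr 1
  simp only [Fin.val_zero, Fin.val_castSucc, Fin.val_last, map_ofNat, map_one, one_mul]
  push_cast [Chebyshev.S_zero]
  have h1 := Chebyshev.S_add_two ℂ (m + 1)
  have h2 := Chebyshev.C_add_two_eq_X_mul_S_sub_two_mul_S ℂ (m + 1)
  ring_nf at h1 h2 ⊢
  linear_combination h1 - h2

theorem charmatrix_circM_mulVec (m : ℕ) :
    (CircM (m + 3)).charmatrix *ᵥ
        (fun i => Chebyshev.S ℂ (i : ℕ) + Chebyshev.S ℂ (m + 1 - (i : ℕ))) =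
      Pi.single (Fin.last _) (Chebyshev.C ℂ ((m + 3 : ℕ) : ℤ) - 2) := by
  have hg : ∀ k : ℤ, X * (Chebyshev.S ℂ k + Chebyshev.S ℂ (m + 1 - k)) =
      (Chebyshev.S ℂ (k - 1) + Chebyshev.S ℂ (m + 1 - (k - 1))) +
        (Chebyshev.S ℂ (k + 1) + Chebyshev.S ℂ (m + 1 - (k + 1))) := by
    intro k
    rw [mul_add, Chebyshev.X_mul_S, Chebyshev.X_mul_S]
    ring_nf
  rw [circM_eq_adjMatrix_pathGraph_add, charmatrix_add_mulVec, charmatrix_add_mulVec,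
    charmatrix_adjMatrix_pathGraph_mulVec _ hg, map_single, map_single,
    single_mulVec_eq_single, single_mulVec_eq_single]
  simp only [map_one, one_mul, Fin.val_zero, Fin.val_last]
  have hsingle : ∀ a b c d : ℂ[X], (Pi.single 0 a + Pi.single (Fin.last (m + 2)) b -
      Pi.single (Fin.last (m + 2)) c - Pi.single 0 d : Fin (m + 3) → ℂ[X]) =
        Pi.single 0 (a - d) + Pi.single (Fin.last (m + 2)) (b - c) := by
    intros; simp only [Pi.single_sub]; abel
  rw [hsingle]
  push_cast
  have h1 := Chebyshev.S_add_two ℂ (m + 1)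
  have h2 := Chebyshev.C_add_two_eq_X_mul_S_sub_two_mul_S ℂ (m + 1)
  ring_nf at h1 h2 ⊢
  rw [Pi.single_zero, zero_add, Chebyshev.S_neg_two, Chebyshev.S_zero]
  congr 1
  linear_combination h1 - h2

theorem charpoly_mcKayM {n : ℕ} (hn : 3 ≤ n) : (McKayM n).charpoly = Chebyshev.C ℂ n - 2 := by
  obtain ⟨m, rfl⟩ : ∃ m, n = m + 3 := ⟨n - 3, by omega⟩
  refine charpoly_eq_of_charmatrix_mulVec_eq_single (j := 0) ?_
    (by simpa using Chebyshev.isMonicOfDegree_C_sub_two ℂ (by omega : 2 ≤ m + 3))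
    (charmatrix_mcKayM_mulVec m)
  simp

theorem charpoly_circM {n : ℕ} (hn : 3 ≤ n) : (CircM n).charpoly = Chebyshev.C ℂ n - 2 := by
  obtain ⟨m, rfl⟩ : ∃ m, n = m + 3 := ⟨n - 3, by omega⟩
  have h := det_mul_eq_mul_adjugate_of_mulVec_eq_single (charmatrix_circM_mulVec m) (Fin.last _)
  have hadj : (CircM (m + 3)).charmatrix.adjugate (Fin.last _) (Fin.last _) =
      Chebyshev.S ℂ (m + 2 : ℕ) := by
    rw [adjugate_fin_succ_eq_det_submatrix, Fin.succAbove_last,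
      charmatrix_submatrix _ (Fin.castSucc_injective _), circM_submatrix_castSucc, ← charpoly,
      charpoly_adjMatrix_pathGraph, ← two_mul, pow_mul]
    simp
  have hu : Chebyshev.S ℂ ((Fin.last (m + 2) : ℕ) : ℤ) +
      Chebyshev.S ℂ (m + 1 - ((Fin.last (m + 2) : ℕ) : ℤ)) = Chebyshev.S ℂ (m + 2 : ℕ) := by
    simp [Chebyshev.S_neg_one]
  rw [hadj, hu] at h
  exact mul_right_cancel₀ (Chebyshev.isMonicOfDegree_S ℂ (m + 2)).ne_zero h

theorem mckay_charpoly_eq_circulant_general (n : ℕ) (hn : 3 ≤ n) :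
    (McKayM n).charpoly = (CircM n).charpoly ∧
      ∀ j : Fin n, (McKayM n).charpoly.IsRoot
        ((2 * Real.cos (2 * Real.pi * (j : ℕ) / n) : ℝ) : ℂ) := by
  rw [charpoly_mcKayM hn, charpoly_circM hn]
  exact ⟨rfl, fun j => Chebyshev.isRoot_C_sub_two_two_mul_cos (by omega) j⟩

theorem mckay_charpoly_eq_circulant (n : ℕ) (hn : 3 ≤ n) (hodd : Odd n) :
    (McKayM n).charpoly = (CircM n).charpoly ∧
      ∀ j : Fin n, (McKayM n).charpoly.IsRoot
        ((2 * Real.cos (2 * Real.pi * (j : ℕ) / n) : ℝ) : ℂ) :=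
  mckay_charpoly_eq_circulant_general n hn
end

section
/- Let n ≥ 3 be odd, ξ = e^{2πi/n}, and let M be the n×n matrix (indexed 0,…,n-1) with ones on the sub- and super-diagonal, except that the last row has entries 2 in positions 0 and n-2 and 0 elsewhere. For 1 ≤ j ≤ (n-1)/2, the vector X_j with X_j(a) = ξ^{(a+1)j} - ξ^{-(a+1)j} for 0 ≤ a ≤ n-2 and X_j(n-1) = 0 is a right eigenvector of M with eigenvalue ξ^j + ξ^{-j}. -/
open scoped BigOperators

private lemma sum_if_coe {n : ℕ} (c : ℕ) (hc : c < n) (f : Fin n → ℂ) :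
    ∑ b : Fin n, (if (b : ℕ) = c then f b else 0) = f ⟨c, hc⟩ := by
  rw [Finset.sum_eq_single_of_mem ⟨c, hc⟩ (Finset.mem_univ _)]
  · simp
  · intro b _ hb
    rw [if_neg]
    simpa [Fin.ext_iff] using hb

theorem mckay_right_eigenvector (n : ℕ) (hn : 3 ≤ n) (hodd : Odd n)
    (j : ℕ) (hj1 : 1 ≤ j) (hj2 : j ≤ (n - 1) / 2)
    (ξ : ℂ) (hξ : ξ = Complex.exp (2 * Real.pi * Complex.I / n))
    (X : Fin n → ℂ)
    (hX : ∀ a : Fin n, X a = if (a : ℕ) = n - 1 then 0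
      else ξ ^ ((((a : ℕ) + 1) * j : ℕ) : ℤ) - ξ ^ (-((((a : ℕ) + 1) * j : ℕ) : ℤ))) :
    (McKayM n).mulVec X = (ξ ^ (j : ℤ) + ξ ^ (-(j : ℤ))) • X := by
  obtain ⟨m, rfl⟩ : ∃ m, n = m + 3 := ⟨n - 3, by omega⟩
  have hξ0 : ξ ≠ 0 := by rw [hξ]; exact Complex.exp_ne_zero _
  have hcast : ((m + 3 : ℕ) : ℂ) ≠ 0 := Nat.cast_ne_zero.mpr (by omega)
  have hξn : ξ ^ (m + 3) = 1 := by
    rw [hξ, ← Complex.exp_nat_mul]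
    rw [show ((m + 3 : ℕ) : ℂ) * (2 * Real.pi * Complex.I / ((m + 3 : ℕ) : ℂ))
        = 2 * Real.pi * Complex.I by
      rw [mul_div_assoc']
      rw [mul_comm ((m + 3 : ℕ) : ℂ) (2 * Real.pi * Complex.I)]
      rw [mul_div_assoc, div_self hcast, mul_one]]
    exact Complex.exp_two_pi_mul_I
  set u : ℂ := ξ ^ j with hu_def
  set v : ℂ := ξ⁻¹ ^ j with hv_def
  have huv : u * v = 1 := by
    rw [hu_def, hv_def, ← mul_pow, mul_inv_cancel₀ hξ0, one_pow]
  have hu : u ^ (m + 3) = 1 := by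
    rw [hu_def, ← pow_mul, mul_comm, pow_mul, hξn, one_pow]
  have hv : v ^ (m + 3) = 1 := by
    rw [hv_def, ← pow_mul, mul_comm, pow_mul, inv_pow, hξn, inv_one, one_pow]
  have hev : ξ ^ (j : ℤ) + ξ ^ (-(j : ℤ)) = u + v := by
    rw [zpow_natCast, zpow_neg, zpow_natCast, hu_def, hv_def, inv_pow]
  have hX' : ∀ (c : ℕ) (hc : c < m + 3),
      X ⟨c, hc⟩ = if c = m + 2 then 0 else u ^ (c + 1) - v ^ (c + 1) := by
    intro c hc
    rw [hX]
    rw [show ((⟨c, hc⟩ : Fin (m + 3)) : ℕ) = c from rfl, show m + 3 - 1 = m + 2 by omega]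
    by_cases h : c = m + 2
    · simp [h]
    · rw [if_neg h, if_neg h]
      congr 1
      · rw [zpow_natCast, hu_def, ← pow_mul, mul_comm]
      · rw [zpow_neg, zpow_natCast, hv_def, ← inv_pow, ← pow_mul, mul_comm]
  have hXval : ∀ (c : ℕ) (hc : c < m + 2),
      X ⟨c, by omega⟩ = u ^ (c + 1) - v ^ (c + 1) := by
    intro c hc
    rw [hX' c (by omega), if_neg (by omega)]
  have hXlast : X ⟨m + 2, by omega⟩ = 0 := by
    rw [hX' (m + 2) (by omega), if_pos rfl]
  funext a
  rcases a with ⟨k, hk⟩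
  rw [show (McKayM (m + 3)).mulVec X ⟨k, hk⟩
      = ∑ b : Fin (m + 3), McKayM (m + 3) ⟨k, hk⟩ b * X b from rfl,
    Pi.smul_apply, smul_eq_mul, hev]
  by_cases hlast : k = m + 2
  · subst hlast
    rw [Finset.sum_congr rfl (fun b _ => show McKayM (m + 3) ⟨m + 2, hk⟩ b * X b
        = (if (b : ℕ) = 0 then 2 * X b else 0)
          + (if (b : ℕ) = m + 1 then 2 * X b else 0) by
      simp only [McKayM]
      rw [if_pos (show ((⟨m + 2, hk⟩ : Fin (m + 3)) : ℕ) = m + 3 - 1 by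
        rw [show ((⟨m + 2, hk⟩ : Fin (m + 3)) : ℕ) = m + 2 from rfl]; omega)]
      rw [show m + 3 - 2 = m + 1 by omega]
      by_cases h0 : (b : ℕ) = 0 <;> by_cases h1 : (b : ℕ) = m + 1 <;>
        simp [h0, h1] <;> omega)]
    rw [Finset.sum_add_distrib, sum_if_coe (n := m + 3) 0 (by omega),
      sum_if_coe (n := m + 3) (m + 1) (by omega)]
    rw [hXval 0 (by omega), hXval (m + 1) (by omega), hXlast]
    linear_combination 2 * v * hu - 2 * u * hv + (2 * v ^ (m + 2) - 2 * u ^ (m + 2)) * huv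
  · by_cases hk0 : k = 0
    · subst hk0
      rw [Finset.sum_congr rfl (fun b _ => show McKayM (m + 3) ⟨0, hk⟩ b * X b
          = (if (b : ℕ) = 1 then X b else 0) by
        simp only [McKayM]
        rw [if_neg (show ¬ ((⟨0, hk⟩ : Fin (m + 3)) : ℕ) = m + 3 - 1 by
          rw [show ((⟨0, hk⟩ : Fin (m + 3)) : ℕ) = 0 from rfl]; omega)]
        by_cases h1 : (b : ℕ) = 1 <;> simp [h1])]
      rw [sum_if_coe (n := m + 3) 1 (by omega)]
      rw [hXval 1 (by omega), hXval 0 (by omega)]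
      ring
    · obtain ⟨k', rfl⟩ : ∃ k', k = k' + 1 := ⟨k - 1, by omega⟩
      have hk'2 : k' + 2 < m + 3 := by omega
      rw [Finset.sum_congr rfl (fun b _ => show McKayM (m + 3) ⟨k' + 1, hk⟩ b * X b
          = (if (b : ℕ) = k' + 2 then X b else 0)
            + (if (b : ℕ) = k' then X b else 0) by
        simp only [McKayM]
        rw [if_neg (show ¬ ((⟨k' + 1, hk⟩ : Fin (m + 3)) : ℕ) = m + 3 - 1 by
          rw [show ((⟨k' + 1, hk⟩ : Fin (m + 3)) : ℕ) = k' + 1 from rfl]; omega)]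
        by_cases h0 : (b : ℕ) = k' + 2 <;> by_cases h1 : (b : ℕ) = k' <;>
          simp [h0, h1] <;> omega)]
      rw [Finset.sum_add_distrib, sum_if_coe (n := m + 3) (k' + 2) hk'2,
        sum_if_coe (n := m + 3) k' (by omega)]
      rw [hXval k' (by omega), hXval (k' + 1) (by omega)]
      by_cases hk'm : k' + 2 = m + 2
      · obtain rfl : k' = m := by omega
        rw [hXlast]
        linear_combination -hu + hv + (v ^ (k' + 1) - u ^ (k' + 1)) * huv
      · rw [hXval (k' + 2) (by omega)]
        linear_combination (v ^ (k' + 1) - u ^ (k' + 1)) * huv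
end
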